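/- arXiv:2109.10067 — 3 statements merged into one kernel-verified Lean document; each statement's English description precedes it below -/
import Mathlib

section
/- Let γ₁, γ₂ ∈ [π/2, π] with γ₁ ≤ γ₂ and let (X, f) be an instance of a biobjective minimization problem. Then every γ₂-supported solution is γ₁-supported. In particular, every γ-supported solution (for any γ ∈ [π/2, π]) is efficient. -/
open Real Set Pointwise

noncomputable section

/-- The linear map `T_γ^φ : ℝ² → ℝ²` from the paper, with `φ' = γ - π/2 - φ`. -/
def Tmap (γ φ : ℝ) (y : ℝ × ℝ) : ℝ × ℝ :=
  (Real.cos (γ - Real.pi/2 - φ) * y.1 + Real.sin (γ - Real.pi/2 - φ) * y.2,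
   Real.sin φ * y.1 + Real.cos φ * y.2)

/-- The ordering cone `C_γ^φ = {y : T_γ^φ(y) ≥ 0 componentwise}`. -/
def coneC (γ φ : ℝ) : Set (ℝ × ℝ) :=
  {y : ℝ × ℝ | 0 ≤ (Tmap γ φ y).1 ∧ 0 ≤ (Tmap γ φ y).2}

/-- The relation `y ≤_γ^φ y' ⇔ y' - y ∈ C_γ^φ`. -/
def leC (γ φ : ℝ) (y y' : ℝ × ℝ) : Prop :=
  y' - y ∈ coneC γ φ

/-- The set of admissible rotation angles `φ ∈ [0, γ - π/2] \ {γ - π, π/2}`. -/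
def PhiDomain (γ : ℝ) : Set ℝ :=
  Set.Icc 0 (γ - Real.pi/2) \ {γ - Real.pi, Real.pi/2}

/-- `x` is optimal with respect to `≤_γ^φ` (minimization). -/
def OptimalWrt (γ φ : ℝ) {X : Type} (f : X → ℝ × ℝ) (x : X) : Prop :=
  ¬ ∃ x', f x' ≠ f x ∧ leC γ φ (f x') (f x)

/-- `x` is `γ`-supported (minimization). -/
def GammaSupported (γ : ℝ) {X : Type} (f : X → ℝ × ℝ) (x : X) : Prop :=
  ∃ φ ∈ PhiDomain γ, OptimalWrt γ φ f x

/-- `x` is efficient (minimization, componentwise order). -/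
def Efficient {X : Type} (f : X → ℝ × ℝ) (x : X) : Prop :=
  ¬ ∃ x', f x' ≠ f x ∧ (f x').1 ≤ (f x).1 ∧ (f x').2 ≤ (f x).2

/-- `S` is an `α`-approximation with respect to the componentwise order (minimization). -/
def IsApprox (α : ℝ) {X : Type} (f : X → ℝ × ℝ) (S : Set X) : Prop :=
  ∀ x : X, ∃ x' ∈ S, (f x').1 ≤ α * (f x).1 ∧ (f x').2 ≤ α * (f x).2

/-- `x` is `α`-approximate for the weighted max-ordering scalarization of `I_γ^φ`
with weights `w₁, w₂`. -/
def MaxOrdApprox (α w₁ w₂ γ φ : ℝ) {X : Type} (f : X → ℝ × ℝ) (x : X) : Prop :=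
  ∀ x'' : X, max (w₁ * (Tmap γ φ (f x)).1) (w₂ * (Tmap γ φ (f x)).2) ≤
    α * max (w₁ * (Tmap γ φ (f x'')).1) (w₂ * (Tmap γ φ (f x'')).2)

/-- The weight `w₁ = √(sin φ)/√(cos φ') + √(cos φ)/√(sin φ')`. -/
def wOne (γ φ : ℝ) : ℝ :=
  Real.sqrt (Real.sin φ) / Real.sqrt (Real.cos (γ - Real.pi/2 - φ)) +
  Real.sqrt (Real.cos φ) / Real.sqrt (Real.sin (γ - Real.pi/2 - φ))

/-- The weight `w₂ = √(sin φ')/√(cos φ) + √(cos φ')/√(sin φ)`. -/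
def wTwo (γ φ : ℝ) : ℝ :=
  Real.sqrt (Real.sin (γ - Real.pi/2 - φ)) / Real.sqrt (Real.cos φ) +
  Real.sqrt (Real.cos (γ - Real.pi/2 - φ)) / Real.sqrt (Real.sin φ)

/-- `x` is optimal with respect to `≤_γ^φ` (maximization). -/
def OptimalWrtMax (γ φ : ℝ) {X : Type} (f : X → ℝ × ℝ) (x : X) : Prop :=
  ¬ ∃ x', f x' ≠ f x ∧ leC γ φ (f x) (f x')

/-- `x` is `γ`-supported (maximization). -/
def GammaSupportedMax (γ : ℝ) {X : Type} (f : X → ℝ × ℝ) (x : X) : Prop :=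
  ∃ φ ∈ PhiDomain γ, OptimalWrtMax γ φ f x

/-- `S` is an `α`-approximation with respect to the componentwise order (maximization). -/
def IsApproxMax (α : ℝ) {X : Type} (f : X → ℝ × ℝ) (S : Set X) : Prop :=
  ∀ x : X, ∃ x' ∈ S, (f x).1 ≤ α * (f x').1 ∧ (f x).2 ≤ α * (f x').2

/-!
The cone `C_γ^φ` is the intersection of the two half-planes with inner normals
`(cos a, sin a)` and `(cos b, sin b)`, where `a = γ - π/2 - φ` and `b = π/2 - φ`, so that
`b - a = π - γ`. Since `b - a < π`, every unit vector with angle between `a` and `b` is a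
nonnegative combination of these two normals, so its half-plane contains the cone. Given
`γ₁ ≤ γ₂` and `φ₂`, the angle `φ₁ = min φ₂ (γ₁ - π/2)` makes the normal angles of `C_{γ₂}^{φ₂}`
lie between those of `C_{γ₁}^{φ₁}`, hence `C_{γ₁}^{φ₁} ⊆ C_{γ₂}^{φ₂}`, and optimality for the
larger cone implies optimality for the smaller one. At `γ = π/2` the only admissible angle is
`φ = 0`, and `C_{π/2}^0` is the nonnegative quadrant, which gives efficiency.
-/

def halfPlane (θ : ℝ) : Set (ℝ × ℝ) :=
  {y | 0 ≤ cos θ * y.1 + sin θ * y.2}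

lemma coneC_eq_inter_halfPlane (γ φ : ℝ) :
    coneC γ φ = halfPlane (γ - π / 2 - φ) ∩ halfPlane (π / 2 - φ) := by
  ext y
  simp only [coneC, Tmap, halfPlane, mem_inter_iff, mem_ofPred_eq, cos_pi_div_two_sub,
    sin_pi_div_two_sub]

lemma sin_sub_mul_add_sin_sub_mul (a b θ : ℝ) (y : ℝ × ℝ) :
    sin (b - θ) * (cos a * y.1 + sin a * y.2) + sin (θ - a) * (cos b * y.1 + sin b * y.2) =
      sin (b - a) * (cos θ * y.1 + sin θ * y.2) := by
  simp only [sin_sub]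
  ring

lemma halfPlane_inter_subset_halfPlane {a b θ : ℝ} (hab : b - a < π) (haθ : a ≤ θ)
    (hθb : θ ≤ b) : halfPlane a ∩ halfPlane b ⊆ halfPlane θ := by
  rintro y ⟨ha, hb⟩
  rcases haθ.eq_or_lt with rfl | haθ
  · exact ha
  have hsin_ab : 0 < sin (b - a) := sin_pos_of_pos_of_lt_pi (by linarith) hab
  have hsin_bθ : 0 ≤ sin (b - θ) := sin_nonneg_of_nonneg_of_le_pi (by linarith) (by linarith)
  have hsin_θa : 0 ≤ sin (θ - a) := sin_nonneg_of_nonneg_of_le_pi (by linarith) (by linarith)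
  refine nonneg_of_mul_nonneg_right ?_ hsin_ab
  rw [← sin_sub_mul_add_sin_sub_mul]
  exact add_nonneg (mul_nonneg hsin_bθ ha) (mul_nonneg hsin_θa hb)

lemma coneC_subset_coneC {γ₁ γ₂ φ₁ φ₂ : ℝ} (hγ₁ : 0 < γ₁) (hγ₂ : γ₂ ≤ π) (hφ : φ₁ ≤ φ₂)
    (hγφ : γ₁ - φ₁ ≤ γ₂ - φ₂) : coneC γ₁ φ₁ ⊆ coneC γ₂ φ₂ := by
  rw [coneC_eq_inter_halfPlane, coneC_eq_inter_halfPlane]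
  have hwidth : (π / 2 - φ₁) - (γ₁ - π / 2 - φ₁) < π := by linarith
  exact subset_inter
    (halfPlane_inter_subset_halfPlane hwidth (by linarith) (by linarith))
    (halfPlane_inter_subset_halfPlane hwidth (by linarith) (by linarith))

lemma coneC_pi_div_two_zero : coneC (π / 2) 0 = {y | 0 ≤ y.1 ∧ 0 ≤ y.2} := by
  ext y
  simp [coneC, Tmap]

lemma OptimalWrt.of_coneC_subset {γ₁ γ₂ φ₁ φ₂ : ℝ} {X : Type} {f : X → ℝ × ℝ} {x : X}
    (hC : coneC γ₁ φ₁ ⊆ coneC γ₂ φ₂) (hx : OptimalWrt γ₂ φ₂ f x) : OptimalWrt γ₁ φ₁ f x :=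
  fun ⟨x', hne, hle⟩ => hx ⟨x', hne, hC hle⟩

lemma OptimalWrt.efficient {X : Type} {f : X → ℝ × ℝ} {x : X}
    (hx : OptimalWrt (π / 2) 0 f x) : Efficient f x := by
  rintro ⟨x', hne, h₁, h₂⟩
  refine hx ⟨x', hne, ?_⟩
  simp only [leC, coneC_pi_div_two_zero, mem_ofPred_eq, Prod.fst_sub, Prod.snd_sub, sub_nonneg]
  exact ⟨h₁, h₂⟩

lemma eq_zero_of_mem_phiDomain_pi_div_two {φ : ℝ} (hφ : φ ∈ PhiDomain (π / 2)) : φ = 0 := by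
  obtain ⟨⟨h₀, h₁⟩, -⟩ := hφ
  linarith

lemma min_mem_phiDomain {γ₁ γ₂ φ : ℝ} (hγ₁ : π / 2 ≤ γ₁) (hγ₂ : γ₂ ≤ π) (h12 : γ₁ ≤ γ₂)
    (hφ : φ ∈ PhiDomain γ₂) : min φ (γ₁ - π / 2) ∈ PhiDomain γ₁ := by
  have hπ := pi_pos
  simp only [PhiDomain, mem_sdiff, mem_Icc, mem_insert_iff, mem_singleton_iff, not_or] at hφ ⊢
  obtain ⟨⟨h₀, hle⟩, hne_left, hne_pi_div_two⟩ := hφ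
  have hlt : φ < π / 2 := lt_of_le_of_ne (by linarith) hne_pi_div_two
  refine ⟨⟨le_min h₀ (by linarith), min_le_right _ _⟩, ?_,
    (lt_of_le_of_lt (min_le_left _ _) hlt).ne⟩
  rcases min_cases φ (γ₁ - π / 2) with ⟨hmin, -⟩ | ⟨hmin, -⟩ <;> rw [hmin]
  · exact fun h => hne_left (by linarith)
  · intro h; linarith

lemma GammaSupported.of_le {γ₁ γ₂ : ℝ} {X : Type} {f : X → ℝ × ℝ} {x : X} (hγ₁ : π / 2 ≤ γ₁)
    (hγ₂ : γ₂ ≤ π) (h12 : γ₁ ≤ γ₂) (hx : GammaSupported γ₂ f x) : GammaSupported γ₁ f x := by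
  obtain ⟨φ, hφ, hopt⟩ := hx
  have hγφ : γ₁ - min φ (γ₁ - π / 2) ≤ γ₂ - φ := by
    have hφle : φ ≤ γ₂ - π / 2 := hφ.1.2
    rcases min_cases φ (γ₁ - π / 2) with ⟨hmin, -⟩ | ⟨hmin, -⟩ <;> rw [hmin] <;> linarith
  exact ⟨_, min_mem_phiDomain hγ₁ hγ₂ h12 hφ,
    hopt.of_coneC_subset (coneC_subset_coneC (by linarith [pi_pos]) hγ₂ (min_le_left _ _) hγφ)⟩

lemma GammaSupported.efficient {γ : ℝ} {X : Type} {f : X → ℝ × ℝ} {x : X}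
    (hγ : γ ∈ Icc (π / 2) π) (hx : GammaSupported γ f x) : Efficient f x := by
  obtain ⟨φ, hφ, hopt⟩ := hx.of_le le_rfl hγ.2 hγ.1
  obtain rfl := eq_zero_of_mem_phiDomain_pi_div_two hφ
  exact hopt.efficient

theorem stmt_3_general (X : Type) (f : X → ℝ × ℝ)
    (γ₁ γ₂ : ℝ) (hγ₁ : γ₁ ∈ Set.Icc (Real.pi/2) Real.pi)
    (hγ₂ : γ₂ ∈ Set.Icc (Real.pi/2) Real.pi) (h12 : γ₁ ≤ γ₂) :
    (∀ x : X, GammaSupported γ₂ f x → GammaSupported γ₁ f x) ∧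
      (∀ γ ∈ Set.Icc (Real.pi/2) Real.pi, ∀ x : X, GammaSupported γ f x → Efficient f x) :=
  ⟨fun _ hx => hx.of_le hγ₁.1 hγ₂.2 h12, fun _ hγ _ hx => hx.efficient hγ⟩

/-- for `γ₁ ≤ γ₂`, every `γ₂`-supported solution is `γ₁`-supported; in
particular every `γ`-supported solution is efficient. -/
theorem stmt_3 (X : Type) (hX : Nonempty X) (f : X → ℝ × ℝ)
    (hf : ∀ x, 0 < (f x).1 ∧ 0 < (f x).2)
    (γ₁ γ₂ : ℝ) (hγ₁ : γ₁ ∈ Set.Icc (Real.pi/2) Real.pi)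
    (hγ₂ : γ₂ ∈ Set.Icc (Real.pi/2) Real.pi) (h12 : γ₁ ≤ γ₂) :
    (∀ x : X, GammaSupported γ₂ f x → GammaSupported γ₁ f x) ∧
      (∀ γ ∈ Set.Icc (Real.pi/2) Real.pi, ∀ x : X, GammaSupported γ f x → Efficient f x) :=
  stmt_3_general X f γ₁ γ₂ hγ₁ hγ₂ h12
end
end

section
/- Let α ≥ 1, γ ∈ (π/2, π], φ ∈ (0, γ − π/2), and let (X, f) be an instance of a biobjective minimization problem. Set w₁ := √(sin φ)/√(cos φ') + √(cos φ)/√(sin φ') and w₂ := √(sin φ')/√(cos φ) + √(cos φ')/√(sin φ), where φ' = γ − π/2 − φ. If x ∈ X is α-approximate for the weighted max-ordering scalarization of I_γ^φ with weights w₁, w₂, then every x' ∈ X with f₁(x')/f₂(x') = √(tan φ')/√(tan φ) satisfies f₁(x) ≤ β·f₁(x') and f₂(x) ≤ β·f₂(x') for β := α·(1 + √(tan φ)·√(tan φ')). -/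
open Real Set Pointwise

noncomputable section

/-!
Write `a, b, a', b'` for the square roots of `sin φ, cos φ, sin φ', cos φ'`, so that
`T_γ^φ(y) = (b'² y₁ + a'² y₂, a² y₁ + b² y₂)`, `w₁ = a/b' + b/a'`, `w₂ = a'/b + b'/a`, and the
prescribed ratio says `y'₁ : y'₂ = a'b : ab'`. On that ray `T₁(y') = (1 + κ) b'² y'₁` and
`T₂(y') = (1 + κ) b² y'₂` with `κ = √(tan φ) √(tan φ')`, and the weights are chosen exactly so
that `w₁ b'² y'₁ = w₂ b² y'₂`: both weighted objectives agree at `y'`. Dropping the nonnegative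
cross term of `T₁(y)` (resp. `T₂(y)`) then turns the `α`-approximation of the max-ordering value
into the componentwise bound with factor `α (1 + κ)`.
-/

lemma sin_pos_and_cos_pos {θ : ℝ} (hθ : θ ∈ Set.Ioo 0 (π / 2)) : 0 < sin θ ∧ 0 < cos θ :=
  ⟨sin_pos_of_pos_of_lt_pi hθ.1 (by linarith [hθ.2, pi_pos]),
    cos_pos_of_mem_Ioo ⟨by linarith [hθ.1, pi_pos], hθ.2⟩⟩

section Ray

variable {a b a' b' : ℝ} {y : ℝ × ℝ}

lemma snd_eq_of_div_eq (ha : a ≠ 0) (hb : b ≠ 0) (ha' : a' ≠ 0) (hb' : b' ≠ 0) (hy₂ : y.2 ≠ 0)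
    (hy : y.1 / y.2 = (a' / b') / (a / b)) : y.2 = y.1 * (a * b') / (a' * b) := by
  rw [eq_div_iff (mul_ne_zero ha' hb)]
  field_simp at hy
  linear_combination -hy

lemma weighted_fst_eq_of_ray (ha' : a' ≠ 0) (hb' : b' ≠ 0)
    (hy : y.2 = y.1 * (a * b') / (a' * b)) :
    (a / b' + b / a') * (b' ^ 2 * y.1 + a' ^ 2 * y.2) =
      (1 + a / b * (a' / b')) * ((a / b' + b / a') * b' ^ 2 * y.1) := by
  rw [hy]
  field_simp

lemma weighted_snd_eq_of_ray (hb : b ≠ 0) (ha' : a' ≠ 0) (hb' : b' ≠ 0)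
    (hy : y.2 = y.1 * (a * b') / (a' * b)) :
    (a' / b + b' / a) * (a ^ 2 * y.1 + b ^ 2 * y.2) =
      (1 + a / b * (a' / b')) * ((a' / b + b' / a) * b ^ 2 * y.2) := by
  rw [hy]
  field_simp
  ring

lemma weighted_balance_of_ray (ha : a ≠ 0) (hb : b ≠ 0) (ha' : a' ≠ 0) (hb' : b' ≠ 0)
    (hy : y.2 = y.1 * (a * b') / (a' * b)) :
    (a / b' + b / a') * b' ^ 2 * y.1 = (a' / b + b' / a) * b ^ 2 * y.2 := by
  rw [hy]
  field_simp

end Ray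

theorem le_mul_of_weighted_max_le {a b a' b' α : ℝ} (ha : 0 < a) (hb : 0 < b) (ha' : 0 < a')
    (hb' : 0 < b') {y y' : ℝ × ℝ} (hy₁ : 0 ≤ y.1) (hy₂ : 0 ≤ y.2) (hy'₂ : y'.2 ≠ 0)
    (hy' : y'.1 / y'.2 = (a' / b') / (a / b))
    (h : max ((a / b' + b / a') * (b' ^ 2 * y.1 + a' ^ 2 * y.2))
        ((a' / b + b' / a) * (a ^ 2 * y.1 + b ^ 2 * y.2)) ≤
      α * max ((a / b' + b / a') * (b' ^ 2 * y'.1 + a' ^ 2 * y'.2))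
        ((a' / b + b' / a) * (a ^ 2 * y'.1 + b ^ 2 * y'.2))) :
    y.1 ≤ α * (1 + a / b * (a' / b')) * y'.1 ∧ y.2 ≤ α * (1 + a / b * (a' / b')) * y'.2 := by
  have hray := snd_eq_of_div_eq ha.ne' hb.ne' ha'.ne' hb'.ne' hy'₂ hy'
  have hbalance := weighted_balance_of_ray ha.ne' hb.ne' ha'.ne' hb'.ne' hray
  rw [weighted_fst_eq_of_ray ha'.ne' hb'.ne' hray,
    weighted_snd_eq_of_ray hb.ne' ha'.ne' hb'.ne' hray, ← hbalance, max_self] at h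
  set w₁ := a / b' + b / a'
  set w₂ := a' / b + b' / a
  set κ := a / b * (a' / b')
  constructor
  · refine le_of_mul_le_mul_left ?_ (by positivity : 0 < w₁ * b' ^ 2)
    calc w₁ * b' ^ 2 * y.1 ≤ w₁ * (b' ^ 2 * y.1 + a' ^ 2 * y.2) := by
          rw [mul_assoc]; gcongr; exact le_add_of_nonneg_right (by positivity)
      _ ≤ α * ((1 + κ) * (w₁ * b' ^ 2 * y'.1)) := (le_max_left _ _).trans h
      _ = w₁ * b' ^ 2 * (α * (1 + κ) * y'.1) := by ring
  · refine le_of_mul_le_mul_left ?_ (by positivity : 0 < w₂ * b ^ 2)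
    calc w₂ * b ^ 2 * y.2 ≤ w₂ * (a ^ 2 * y.1 + b ^ 2 * y.2) := by
          rw [mul_assoc]; gcongr; exact le_add_of_nonneg_left (by positivity)
      _ ≤ α * ((1 + κ) * (w₁ * b' ^ 2 * y'.1)) := (le_max_right _ _).trans h
      _ = w₂ * b ^ 2 * (α * (1 + κ) * y'.2) := by rw [hbalance]; ring

theorem stmt_11_general (α γ φ φ' : ℝ) (hγ : γ ∈ Set.Ioc (Real.pi/2) Real.pi)
    (hφ : φ ∈ Set.Ioo 0 (γ - Real.pi/2)) (hφ' : φ' = γ - Real.pi/2 - φ)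
    (X : Type) (f : X → ℝ × ℝ)
    (hf : ∀ x, 0 < (f x).1 ∧ 0 < (f x).2)
    (x : X) (hx : MaxOrdApprox α (wOne γ φ) (wTwo γ φ) γ φ f x)
    (β : ℝ) (hβ : β = α * (1 + Real.sqrt (Real.tan φ) * Real.sqrt (Real.tan φ'))) :
    ∀ x' : X, (f x').1 / (f x').2 = Real.sqrt (Real.tan φ') / Real.sqrt (Real.tan φ) →
      (f x).1 ≤ β * (f x').1 ∧ (f x).2 ≤ β * (f x').2 := by
  intro x' hratio
  subst hφ' hβ
  obtain ⟨hs, hc⟩ := sin_pos_and_cos_pos (θ := φ) ⟨hφ.1, by linarith [hγ.2, hφ.2]⟩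
  obtain ⟨hs', hc'⟩ := sin_pos_and_cos_pos (θ := γ - π / 2 - φ)
    ⟨by linarith [hφ.2], by linarith [hγ.2, hφ.1]⟩
  have hT : ∀ y, Tmap γ φ y =
      (√(cos (γ - π / 2 - φ)) ^ 2 * y.1 + √(sin (γ - π / 2 - φ)) ^ 2 * y.2,
        √(sin φ) ^ 2 * y.1 + √(cos φ) ^ 2 * y.2) := by
    intro y
    simp only [Tmap, sq_sqrt hs.le, sq_sqrt hc.le, sq_sqrt hs'.le, sq_sqrt hc'.le]
  rw [tan_eq_sin_div_cos, tan_eq_sin_div_cos, sqrt_div hs.le, sqrt_div hs'.le] at hratio ⊢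
  refine le_mul_of_weighted_max_le (sqrt_pos.2 hs) (sqrt_pos.2 hc) (sqrt_pos.2 hs')
    (sqrt_pos.2 hc') (hf x).1.le (hf x).2.le (hf x').2.ne' hratio ?_
  simpa only [MaxOrdApprox, wOne, wTwo, hT] using hx x'

/-- an `α`-approximate solution `x` for the weighted max-ordering
scalarization of `I_γ^φ` with weights `w₁, w₂` approximates, componentwise with factor
`α · (1 + √(tan φ)·√(tan φ'))`, every `x'` with `f₁(x')/f₂(x') = √(tan φ')/√(tan φ)`. -/
theorem stmt_11 (α γ φ φ' : ℝ) (hα : 1 ≤ α) (hγ : γ ∈ Set.Ioc (Real.pi/2) Real.pi)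
    (hφ : φ ∈ Set.Ioo 0 (γ - Real.pi/2)) (hφ' : φ' = γ - Real.pi/2 - φ)
    (X : Type) (hX : Nonempty X) (f : X → ℝ × ℝ)
    (hf : ∀ x, 0 < (f x).1 ∧ 0 < (f x).2)
    (x : X) (hx : MaxOrdApprox α (wOne γ φ) (wTwo γ φ) γ φ f x)
    (β : ℝ) (hβ : β = α * (1 + Real.sqrt (Real.tan φ) * Real.sqrt (Real.tan φ'))) :
    ∀ x' : X, (f x').1 / (f x').2 = Real.sqrt (Real.tan φ') / Real.sqrt (Real.tan φ) →
      (f x).1 ≤ β * (f x').1 ∧ (f x).2 ≤ β * (f x').2 :=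
  stmt_11_general α γ φ φ' hγ hφ hφ' X f hf x hx β hβ
end
end

section
/- Let (X, f) be an instance of a biobjective minimization problem such that f(X) + ℝ²_≥ is closed, and let γ ∈ [π/2, π]. Then the set of γ-supported solutions is a (2γ/π)-approximation with respect to the componentwise order ≤. -/
open Real Set Pointwise

noncomputable section

/-!
Write `δ = γ - π/2` and `c = 2δ/π`, so that `2γ/π = 1 + c`. For `γ < π` the matrix of `T_γ^φ`
has nonnegative entries and positive determinant `cos δ`, so, the upper image being closed, below
every `f(x)` in the order `≤_γ^φ` there is a minimal image point `f(x')`; then `x'` is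
`γ`-supported and `T_γ^φ(f x') ≤ T_γ^φ(f x)`. Choosing `φ` with `tan φ ≤ c f₂(x)/f₁(x)` and
`tan (δ - φ) ≤ c f₁(x)/f₂(x)`, which is possible because `tan (δ/2) ≤ c` by concavity of `arctan`,
turns this into `f(x') ≤ (1 + c) f(x)`.

For `γ = π` every cone `C_π^φ` is a half-plane, and unique minimizers of weighted sums
`t f₁ + f₂` with `t > 0` are `γ`-supported. For `t₀ = f₂(x)/f₁(x)` we have
`t₀ f₁(x) + f₂(x) = 2 f₂(x) = 2 t₀ f₁(x)`, so every positive point with a weighted sum at most this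
value lies strictly below `2 f(x)`. All but countably many weights have a unique minimizer, and by
compactness one close enough to `t₀` still lies below `2 f(x)`.
-/

def weightedSum (p q : ℝ) (y : ℝ × ℝ) : ℝ := p * y.1 + q * y.2

@[fun_prop]
lemma continuous_weightedSum (p q : ℝ) : Continuous (weightedSum p q) := by
  unfold weightedSum; fun_prop

lemma weightedSum_mono {p q : ℝ} (hp : 0 ≤ p) (hq : 0 ≤ q) : Monotone (weightedSum p q) :=
  fun _ _ h => add_le_add (mul_le_mul_of_nonneg_left h.1 hp) (mul_le_mul_of_nonneg_left h.2 hq)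

lemma eq_of_weightedSum_eq {a b c d : ℝ} (hdet : a * d - b * c ≠ 0) {y y' : ℝ × ℝ}
    (h₁ : weightedSum a b y = weightedSum a b y') (h₂ : weightedSum c d y = weightedSum c d y') :
    y = y' := by
  unfold weightedSum at h₁ h₂
  exact Prod.ext (mul_left_cancel₀ hdet (by linear_combination d * h₁ - b * h₂))
    (mul_left_cancel₀ hdet (by linear_combination a * h₂ - c * h₁))

lemma fst_le_of_weightedSum_le {t t' : ℝ} (htt' : t < t') {u v : ℝ × ℝ}
    (hu : weightedSum t 1 u ≤ weightedSum t 1 v) (hv : weightedSum t' 1 v ≤ weightedSum t' 1 u) :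
    v.1 ≤ u.1 := by
  unfold weightedSum at hu hv
  by_contra h
  nlinarith [mul_pos (sub_pos.2 htt') (sub_pos.2 (not_le.1 h))]

lemma le_one_add_mul_of_add_le {p q u v a b c : ℝ} (hp : 0 < p) (hq : 0 ≤ q) (hv : 0 ≤ v)
    (h : p * u + q * v ≤ p * a + q * b) (hb : q * b ≤ c * (p * a)) : u ≤ (1 + c) * a := by
  refine le_of_mul_le_mul_left ?_ hp
  nlinarith [mul_nonneg hq hv]

lemma isCompact_inter_weightedSum_le {Y : Set (ℝ × ℝ)} (hY : IsClosed Y) (hY0 : Y ⊆ Ici 0)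
    {p q : ℝ} (hp : 0 < p) (hq : 0 < q) (c : ℝ) :
    IsCompact (Y ∩ {y | weightedSum p q y ≤ c}) := by
  refine (isCompact_Icc (a := 0) (b := (c / p, c / q))).of_isClosed_subset
    (hY.inter (isClosed_le (by fun_prop) continuous_const)) ?_
  rintro y ⟨hyY, hyc⟩
  have h1 : 0 ≤ y.1 := (hY0 hyY).1
  have h2 : 0 ≤ y.2 := (hY0 hyY).2
  have hyc' : p * y.1 + q * y.2 ≤ c := hyc
  refine ⟨⟨h1, h2⟩, (le_div_iff₀ hp).2 ?_, (le_div_iff₀ hq).2 ?_⟩ <;> nlinarith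

@[fun_prop]
lemma continuous_Tmap (γ φ : ℝ) : Continuous (Tmap γ φ) := by
  unfold Tmap; fun_prop

lemma Tmap_sub (γ φ : ℝ) (y y' : ℝ × ℝ) : Tmap γ φ (y - y') = Tmap γ φ y - Tmap γ φ y' := by
  ext <;> simp only [Tmap, Prod.fst_sub, Prod.snd_sub] <;> ring

lemma leC_iff {γ φ : ℝ} {y y' : ℝ × ℝ} : leC γ φ y y' ↔ Tmap γ φ y ≤ Tmap γ φ y' := by
  rw [← sub_nonneg, ← Tmap_sub]
  exact Iff.rfl

lemma optimalWrt_iff {γ φ : ℝ} {X : Type} {f : X → ℝ × ℝ} {x : X} :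
    OptimalWrt γ φ f x ↔ ∀ x', Tmap γ φ (f x') ≤ Tmap γ φ (f x) → f x' = f x := by
  simp only [OptimalWrt, leC_iff, not_exists, not_and]
  exact forall_congr' fun x' => by tauto

lemma mem_phiDomain {γ φ : ℝ} (h₀ : 0 ≤ φ) (h₁ : φ ≤ γ - π / 2) (h₂ : γ - π < φ)
    (h₃ : φ < π / 2) : φ ∈ PhiDomain γ := by
  refine ⟨⟨h₀, h₁⟩, ?_⟩
  simp only [mem_insert_iff, mem_singleton_iff]
  rintro (rfl | rfl) <;> linarith

lemma optimalWrt_arctan_of_strict_min {X : Type} {f : X → ℝ × ℝ} (γ : ℝ) {t : ℝ} {xm : X}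
    (h : ∀ x, f x ≠ f xm → weightedSum t 1 (f xm) < weightedSum t 1 (f x)) :
    OptimalWrt γ (arctan t) f xm := by
  have hcos := cos_arctan_pos t
  have hsum : ∀ y, weightedSum (sin (arctan t)) (cos (arctan t)) y =
      cos (arctan t) * weightedSum t 1 y := fun y => by
    rw [← tan_mul_cos hcos.ne', tan_arctan]; simp only [weightedSum]; ring
  refine optimalWrt_iff.2 fun x hx => by_contra fun hne => ?_
  have h₂ : weightedSum (sin (arctan t)) (cos (arctan t)) (f x) ≤
      weightedSum (sin (arctan t)) (cos (arctan t)) (f xm) := hx.2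
  rw [hsum, hsum] at h₂
  exact (h x hne).not_ge (le_of_mul_le_mul_left h₂ hcos)

lemma mul_pi_div_four_le_arctan {x : ℝ} (h₀ : 0 ≤ x) (h₁ : x ≤ 1) : π / 4 * x ≤ arctan x := by
  have hconc : ConcaveOn ℝ (Ici 0) arctan := by
    refine AntitoneOn.concaveOn_of_deriv (convex_Ici 0) continuous_arctan.continuousOn
      differentiable_arctan.differentiableOn ?_
    rw [Real.deriv_arctan, interior_Ici]
    intro s hs t ht hst
    have hs : 0 < s := hs
    dsimp only
    gcongr
  have h := hconc.2 (mem_Ici.2 le_rfl) (mem_Ici.2 zero_le_one) (sub_nonneg.2 h₁) h₀ (by ring)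
  simpa [arctan_one, mul_comm] using h

lemma le_arctan_mul_add_arctan_div {δ r : ℝ} (h₀ : 0 ≤ δ) (h₁ : δ < π / 2) (hr : 0 < r) :
    δ ≤ arctan (2 * δ / π * r) + arctan (2 * δ / π / r) := by
  set c := 2 * δ / π
  have hc₀ : 0 ≤ c := by positivity
  have hc₁ : c < 1 := by rw [div_lt_one pi_pos]; linarith
  have hcc : c * c < 1 := by nlinarith
  have hprod : c * r * (c / r) = c * c := by field_simp
  have hamgm : c + c ≤ c * r + c / r := by
    have : c * r + c / r - (c + c) = c * (r - 1) ^ 2 / r := by field_simp; ring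
    linarith [show 0 ≤ c * (r - 1) ^ 2 / r by positivity]
  have hhalf : δ / 2 ≤ arctan c := by
    convert mul_pi_div_four_le_arctan hc₀ hc₁.le using 1
    simp only [c]; field_simp; ring
  calc δ ≤ arctan c + arctan c := by linarith
    _ = arctan ((c + c) / (1 - c * c)) := arctan_add hcc
    _ ≤ arctan ((c * r + c / r) / (1 - c * c)) :=
        arctan_strictMono.monotone (by gcongr)
    _ = arctan (c * r) + arctan (c / r) := by
        rw [arctan_add (hprod ▸ hcc), hprod]

lemma sin_le_mul_cos_of_le_arctan {θ s : ℝ} (hθ : -(π / 2) < θ) (hθs : θ ≤ arctan s) :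
    sin θ ≤ s * cos θ := by
  have hθ' : θ < π / 2 := hθs.trans_lt (arctan_lt_pi_div_two s)
  have hcos : 0 < cos θ := cos_pos_of_mem_Ioo ⟨hθ, hθ'⟩
  have htan : tan θ ≤ s := by
    simpa using strictMonoOn_tan.monotoneOn ⟨hθ, hθ'⟩ (arctan_mem_Ioo s) hθs
  rw [← tan_mul_cos hcos.ne']
  exact mul_le_mul_of_nonneg_right htan hcos.le

section UpperImage

variable {X : Type} {f : X → ℝ × ℝ}

/-- `f(X) + ℝ²_≥`: `Ici 0` is the nonnegative orthant, definitionally the set in `stmt_17`. -/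
def upperImage (f : X → ℝ × ℝ) : Set (ℝ × ℝ) := range f + Ici 0

lemma mem_upperImage_self (x : X) : f x ∈ upperImage f :=
  ⟨f x, mem_range_self x, 0, mem_Ici.2 le_rfl, add_zero _⟩

lemma exists_le_of_mem_upperImage {y : ℝ × ℝ} (hy : y ∈ upperImage f) : ∃ x, f x ≤ y := by
  obtain ⟨_, ⟨x, rfl⟩, p, hp, rfl⟩ := hy
  exact ⟨x, le_add_of_nonneg_right hp⟩

variable (hf : ∀ x, 0 < (f x).1 ∧ 0 < (f x).2) (hclosed : IsClosed (upperImage f))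
include hf

lemma pos_of_mem_upperImage {y : ℝ × ℝ} (hy : y ∈ upperImage f) : 0 < y.1 ∧ 0 < y.2 := by
  obtain ⟨x, hx⟩ := exists_le_of_mem_upperImage hy
  exact ⟨(hf x).1.trans_le hx.1, (hf x).2.trans_le hx.2⟩

lemma upperImage_subset_Ici : upperImage f ⊆ Ici 0 := fun _ hy =>
  ⟨(pos_of_mem_upperImage hf hy).1.le, (pos_of_mem_upperImage hf hy).2.le⟩

include hclosed

lemma exists_pos_le_fst_of_weightedSum_le {p q : ℝ} (hp : 0 < p) (hq : 0 < q) (c : ℝ) :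
    ∃ η > 0, ∀ x, weightedSum p q (f x) ≤ c → η ≤ (f x).1 := by
  set K := upperImage f ∩ {y | weightedSum p q y ≤ c}
  have hK : IsCompact K :=
    isCompact_inter_weightedSum_le hclosed (upperImage_subset_Ici hf) hp hq c
  rcases K.eq_empty_or_nonempty with hempty | hne
  · exact ⟨1, one_pos, fun x hx =>
      absurd hempty (nonempty_iff_ne_empty.1 ⟨f x, mem_upperImage_self x, hx⟩)⟩
  · obtain ⟨y₀, hy₀, hmin⟩ := hK.exists_isMinOn hne continuous_fst.continuousOn
    exact ⟨y₀.1, (pos_of_mem_upperImage hf hy₀.1).1,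
      fun x hx => hmin ⟨mem_upperImage_self x, hx⟩⟩

lemma exists_forall_weightedSum_le_on {p q : ℝ} (hp : 0 < p) (hq : 0 < q) {C : Set (ℝ × ℝ)}
    (hC : IsClosed C) (hCdown : ∀ y ∈ C, ∀ y' ≤ y, y' ∈ C) {x₀ : X} (hx₀ : f x₀ ∈ C) :
    ∃ xm, f xm ∈ C ∧ ∀ x, f x ∈ C → weightedSum p q (f xm) ≤ weightedSum p q (f x) := by
  set c := weightedSum p q (f x₀)
  have hK : IsCompact (upperImage f ∩ C ∩ {y | weightedSum p q y ≤ c}) := by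
    rw [inter_right_comm]
    exact (isCompact_inter_weightedSum_le hclosed (upperImage_subset_Ici hf) hp hq c).inter_right hC
  obtain ⟨y₀, ⟨⟨hy₀Y, hy₀C⟩, hy₀c⟩, hmin⟩ :=
    hK.exists_isMinOn ⟨f x₀, ⟨mem_upperImage_self x₀, hx₀⟩, le_refl c⟩
      (continuous_weightedSum p q).continuousOn
  obtain ⟨xm, hxm⟩ := exists_le_of_mem_upperImage hy₀Y
  have hxm_le : weightedSum p q (f xm) ≤ weightedSum p q y₀ := weightedSum_mono hp.le hq.le hxm
  refine ⟨xm, hCdown y₀ hy₀C _ hxm, fun x hx => hxm_le.trans ?_⟩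
  rcases le_or_gt (weightedSum p q (f x)) c with hxc | hxc
  · exact hmin ⟨⟨mem_upperImage_self x, hx⟩, hxc⟩
  · exact hy₀c.trans hxc.le

lemma exists_optimalWrt_Tmap_le {γ φ : ℝ} (hφ : 0 ≤ φ) (hφ' : 0 ≤ γ - π / 2 - φ) (hγ : γ < π)
    (x : X) : ∃ xs, Tmap γ φ (f xs) ≤ Tmap γ φ (f x) ∧ OptimalWrt γ φ f xs := by
  have hπ := pi_pos
  set φ' := γ - π / 2 - φ with hφ'_def
  have hcos' : 0 < cos φ' := cos_pos_of_mem_Ioo ⟨by linarith, by linarith⟩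
  have hcos : 0 < cos φ := cos_pos_of_mem_Ioo ⟨by linarith, by linarith⟩
  have hsin' : 0 ≤ sin φ' := sin_nonneg_of_nonneg_of_le_pi hφ' (by linarith)
  have hsin : 0 ≤ sin φ := sin_nonneg_of_nonneg_of_le_pi hφ (by linarith)
  have hdet : cos φ' * cos φ - sin φ' * sin φ ≠ 0 := by
    rw [← cos_add]
    exact (cos_pos_of_mem_Ioo ⟨by linarith, by linarith⟩).ne'
  have hmono : Monotone (Tmap γ φ) := fun y y' h =>
    ⟨weightedSum_mono hcos'.le hsin' h, weightedSum_mono hsin hcos.le h⟩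
  have hsum : ∀ y, weightedSum (cos φ' + sin φ) (sin φ' + cos φ) y =
      weightedSum (cos φ') (sin φ') y + weightedSum (sin φ) (cos φ) y :=
    fun y => by simp only [weightedSum]; ring
  obtain ⟨xs, hxs, hmin⟩ := exists_forall_weightedSum_le_on hf hclosed
    (add_pos_of_pos_of_nonneg hcos' hsin) (add_pos_of_nonneg_of_pos hsin' hcos)
    (C := {y | Tmap γ φ y ≤ Tmap γ φ (f x)}) (isClosed_le (by fun_prop) continuous_const)
    (fun y hy y' hy' => (hmono hy').trans hy) (x₀ := x) (le_refl (Tmap γ φ (f x)))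
  refine ⟨xs, hxs, optimalWrt_iff.2 fun x' hx' => ?_⟩
  have hle := hmin x' (hx'.trans hxs)
  rw [hsum, hsum] at hle
  have h₁ : weightedSum (cos φ') (sin φ') (f x') ≤ weightedSum (cos φ') (sin φ') (f xs) := hx'.1
  have h₂ : weightedSum (sin φ) (cos φ) (f x') ≤ weightedSum (sin φ) (cos φ) (f xs) := hx'.2
  exact eq_of_weightedSum_eq hdet (by linarith) (by linarith)

lemma exists_gammaSupported_approx_of_lt_pi {γ : ℝ} (hγ₁ : π / 2 ≤ γ) (hγ₂ : γ < π) (x : X) :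
    ∃ x', GammaSupported γ f x' ∧
      (f x').1 ≤ 2 * γ / π * (f x).1 ∧ (f x').2 ≤ 2 * γ / π * (f x).2 := by
  have hπ := pi_pos
  obtain ⟨ha, hb⟩ := hf x
  set δ := γ - π / 2 with hδ
  set c := 2 * δ / π
  set r := (f x).2 / (f x).1
  have hr : 0 < r := div_pos hb ha
  have hα : 2 * γ / π = 1 + c := by simp only [c, δ]; field_simp; ring
  set φ := min δ (arctan (c * r))
  have hφ₀ : 0 ≤ φ := le_min (by linarith) (arctan_nonneg.2 (by positivity))
  have hφδ : φ ≤ δ := min_le_left _ _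
  have hφ'_le : δ - φ ≤ arctan (c / r) := by
    have h₁ := le_arctan_mul_add_arctan_div (δ := δ) (by linarith) (by linarith) hr
    have h₂ : 0 ≤ arctan (c / r) := arctan_nonneg.2 (by positivity)
    have : δ - arctan (c / r) ≤ φ := le_min (by linarith) (by linarith)
    linarith
  have hsin := sin_le_mul_cos_of_le_arctan (by linarith) (min_le_right δ (arctan (c * r)))
  have hsin' := sin_le_mul_cos_of_le_arctan (by linarith) hφ'_le
  obtain ⟨xs, hle, hopt⟩ := exists_optimalWrt_Tmap_le hf hclosed hφ₀ (by linarith) hγ₂ x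
  have hcos : 0 < cos φ := cos_pos_of_mem_Ioo ⟨by linarith, by linarith⟩
  have hcos' : 0 < cos (δ - φ) := cos_pos_of_mem_Ioo ⟨by linarith, by linarith⟩
  refine ⟨xs, ⟨φ, mem_phiDomain hφ₀ hφδ (by linarith) (by linarith), hopt⟩, ?_, ?_⟩
  · rw [hα]
    refine le_one_add_mul_of_add_le hcos' (sin_nonneg_of_nonneg_of_le_pi (by linarith)
      (by linarith)) (hf xs).2.le hle.1 ?_
    calc sin (δ - φ) * (f x).2 ≤ c / r * cos (δ - φ) * (f x).2 := by gcongr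
      _ = c * (cos (δ - φ) * (f x).1) := by simp only [r]; field_simp
  · have h₂ : sin φ * (f xs).1 + cos φ * (f xs).2 ≤ sin φ * (f x).1 + cos φ * (f x).2 := hle.2
    rw [hα]
    refine le_one_add_mul_of_add_le hcos (sin_nonneg_of_nonneg_of_le_pi hφ₀ (by linarith))
      (hf xs).1.le (b := (f x).1) (by linarith) ?_
    calc sin φ * (f x).1 ≤ c * r * cos φ * (f x).1 := by gcongr
      _ = c * (cos φ * (f x).2) := by simp only [r]; field_simp

lemma exists_forall_weightedSum_le [Nonempty X] {p q : ℝ} (hp : 0 < p) (hq : 0 < q) :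
    ∃ xm, ∀ x, weightedSum p q (f xm) ≤ weightedSum p q (f x) := by
  obtain ⟨xm, -, hxm⟩ := exists_forall_weightedSum_le_on hf hclosed hp hq isClosed_univ
    (fun _ _ _ _ => mem_univ _) (mem_univ (f (Classical.arbitrary X)))
  exact ⟨xm, fun x => hxm x (mem_univ _)⟩

/-- For such a weight the first coordinates of the minimizers span a nonempty open interval, and
these intervals are disjoint for different weights. -/
lemma countable_setOf_not_exists_strict_min [Nonempty X] :
    {t : ℝ | 0 < t ∧
      ¬ ∃ xm, ∀ x, f x ≠ f xm → weightedSum t 1 (f xm) < weightedSum t 1 (f x)}.Countable := by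
  set M : ℝ → Set X := fun t => {xm | ∀ x, weightedSum t 1 (f xm) ≤ weightedSum t 1 (f x)}
  set I : ℝ → Set ℝ := fun t => ⋃ u ∈ M t, ⋃ v ∈ M t, Ioo (f u).1 (f v).1
  refine PairwiseDisjoint.countable_of_isOpen (s := I) ?_
    (fun _ _ => isOpen_biUnion fun _ _ => isOpen_biUnion fun _ _ => isOpen_Ioo) ?_
  · intro t ht t' ht' hne
    wlog hlt : t < t' generalizing t t'
    · exact (this ht' ht hne.symm (lt_of_le_of_ne (not_lt.1 hlt) hne.symm)).symm
    refine Set.disjoint_left.2 fun r hr hr' => ?_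
    simp only [I, mem_iUnion] at hr hr'
    obtain ⟨u, hu, v, -, hr⟩ := hr
    obtain ⟨u', -, v', hv', hr'⟩ := hr'
    have := fst_le_of_weightedSum_le hlt (hu v') (hv' u)
    linarith [hr.1, hr'.2]
  · rintro t ⟨ht, hbad⟩
    obtain ⟨xm, hxm⟩ := exists_forall_weightedSum_le hf hclosed ht one_pos
    push Not at hbad
    obtain ⟨x, hne, hx⟩ := hbad xm
    have hx_min : x ∈ M t := fun x' => hx.trans (hxm x')
    have hfst : (f x).1 ≠ (f xm).1 := fun h => hne <| Prod.ext h <| by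
      have := le_antisymm hx (hxm x)
      simp only [weightedSum, h] at this
      linarith
    rcases hfst.lt_or_gt with hlt | hlt
    · obtain ⟨r, hr⟩ := nonempty_Ioo.2 hlt
      exact ⟨r, mem_biUnion hx_min (mem_biUnion hxm hr)⟩
    · obtain ⟨r, hr⟩ := nonempty_Ioo.2 hlt
      exact ⟨r, mem_biUnion hxm (mem_biUnion hx_min hr)⟩

lemma exists_strict_min_mem_Ioo [Nonempty X] {lo hi : ℝ} (hlo : 0 < lo) (hlohi : lo < hi) :
    ∃ t ∈ Ioo lo hi, ∃ xm, ∀ x, f x ≠ f xm → weightedSum t 1 (f xm) < weightedSum t 1 (f x) := by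
  obtain ⟨t, ht, hlot, hthi⟩ :=
    ((countable_setOf_not_exists_strict_min hf hclosed).dense_compl ℝ).exists_between hlohi
  refine ⟨t, ⟨hlot, hthi⟩, ?_⟩
  by_contra h
  exact ht ⟨hlo.trans hlot, h⟩

lemma exists_gammaSupported_approx_pi (x : X) :
    ∃ x', GammaSupported π f x' ∧ (f x').1 ≤ 2 * (f x).1 ∧ (f x').2 ≤ 2 * (f x).2 := by
  have : Nonempty X := ⟨x⟩
  obtain ⟨ha, hb⟩ := hf x
  set t₀ := (f x).2 / (f x).1
  have ht₀ : 0 < t₀ := div_pos hb ha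
  have hb_eq : t₀ * (f x).1 = (f x).2 := div_mul_cancel₀ _ ha.ne'
  obtain ⟨η, hη, hηle⟩ := exists_pos_le_fst_of_weightedSum_le hf hclosed ht₀ one_pos
    ((t₀ + 1) * (f x).1 + (f x).2)
  set ε := min 1 (t₀ * η / (f x).1)
  have hε : 0 < ε := lt_min one_pos (by positivity)
  obtain ⟨t, ⟨ht₀t, htε⟩, xm, hxm⟩ :=
    exists_strict_min_mem_Ioo hf hclosed ht₀ (lt_add_of_pos_right t₀ hε)
  have ht : 0 < t := ht₀.trans ht₀t
  have hle : t * (f xm).1 + 1 * (f xm).2 ≤ t * (f x).1 + 1 * (f x).2 := by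
    by_cases h : f x = f xm
    · rw [h]
    · exact (hxm x h).le
  obtain ⟨hm₁, hm₂⟩ := hf xm
  have ht₁ : t ≤ t₀ + 1 := by linarith [min_le_left 1 (t₀ * η / (f x).1)]
  have htη : (t - t₀) * (f x).1 ≤ t₀ * η := by
    rw [← le_div_iff₀ ha]; linarith [min_le_right 1 (t₀ * η / (f x).1)]
  have ht₀m : t₀ * (f xm).1 ≤ t * (f xm).1 := mul_le_mul_of_nonneg_right ht₀t.le hm₁.le
  have hη_le : η ≤ (f xm).1 := hηle xm <| by
    simp only [weightedSum]
    linarith [mul_le_mul_of_nonneg_right ht₁ ha.le]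
  refine ⟨xm, ⟨arctan t, mem_phiDomain (arctan_pos.2 ht).le ?_ ?_ (arctan_lt_pi_div_two t),
    optimalWrt_arctan_of_strict_min π hxm⟩, ?_, ?_⟩
  · linarith [arctan_lt_pi_div_two t]
  · linarith [arctan_pos.2 ht]
  · refine le_of_mul_le_mul_left ?_ ht
    linarith [mul_lt_mul_of_pos_right ht₀t ha]
  · linarith [mul_le_mul_of_nonneg_left hη_le ht₀.le]

end UpperImage

theorem stmt_17_general (X : Type) (f : X → ℝ × ℝ)
    (hf : ∀ x, 0 < (f x).1 ∧ 0 < (f x).2)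
    (hclosed : IsClosed (Set.range f + {y : ℝ × ℝ | 0 ≤ y.1 ∧ 0 ≤ y.2}))
    (γ : ℝ) (hγ : γ ∈ Set.Icc (Real.pi/2) Real.pi) :
    IsApprox (2 * γ / Real.pi) f {x : X | GammaSupported γ f x} := by
  intro x
  rcases hγ.2.lt_or_eq with hlt | rfl
  · exact exists_gammaSupported_approx_of_lt_pi hf hclosed hγ.1 hlt x
  · rw [mul_div_assoc, div_self pi_ne_zero, mul_one]
    exact exists_gammaSupported_approx_pi hf hclosed x

/-- the set of `γ`-supported solutions is a `(2γ/π)`-approximation. -/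
theorem stmt_17 (X : Type) (hX : Nonempty X) (f : X → ℝ × ℝ)
    (hf : ∀ x, 0 < (f x).1 ∧ 0 < (f x).2)
    (hclosed : IsClosed (Set.range f + {y : ℝ × ℝ | 0 ≤ y.1 ∧ 0 ≤ y.2}))
    (γ : ℝ) (hγ : γ ∈ Set.Icc (Real.pi/2) Real.pi) :
    IsApprox (2 * γ / Real.pi) f {x : X | GammaSupported γ f x} :=
  stmt_17_general X f hf hclosed γ hγ
end
end
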